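/- Let H be a linear 3-uniform hypergraph whose edges are partitioned into matchings M₁,…,M_k (colors). Let G be the signature graph of H, and let x = (u,v) be a vertex of G. For a subset 𝒞 ⊆ [k] of colors, the number of edges of G incident to x whose color-pair meets 𝒞 is at most 4|𝒞|. -/
import Mathlib

private lemma three_distinct {V : Type*} [DecidableEq V] {a b c : V}
    (h : ({a, b, c} : Finset V).card = 3) : a ≠ b ∧ a ≠ c ∧ b ≠ c := by
  refine ⟨?_, ?_, ?_⟩ <;> intro hh
  · rw [hh] at h
    have h1 : ({b, b, c} : Finset V) = {b, c} := by simp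
    rw [h1] at h
    have h2 := Finset.card_insert_le b ({c} : Finset V)
    simp only [Finset.card_singleton] at h2
    omega
  · rw [hh] at h
    have h1 : ({c, b, c} : Finset V) = {c, b} := by
      ext z; simp; tauto
    rw [h1] at h
    have h2 := Finset.card_insert_le c ({b} : Finset V)
    simp only [Finset.card_singleton] at h2
    omega
  · rw [hh] at h
    have h1 : ({a, c, c} : Finset V) = {a, c} := by simp
    rw [h1] at h
    have h2 := Finset.card_insert_le a ({c} : Finset V)
    simp only [Finset.card_singleton] at h2
    omega

/-- Key lemma: for a fixed color `i`, at most 2 neighbors `q` have their first cherry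
edge in `M i`. -/
private lemma key {V : Type*} [Fintype V] [DecidableEq V] {k : ℕ}
    {M : Fin k → Finset (Finset V)} {E : Finset (Finset V)}
    (hcardE : ∀ e ∈ E, e.card = 3)
    (hlinear : ∀ e ∈ E, ∀ e' ∈ E, e ≠ e' → (e ∩ e').card ≤ 1)
    (i : Fin k) (hME : M i ⊆ E)
    (hmatch : ∀ e ∈ M i, ∀ e' ∈ M i, e ≠ e' → Disjoint e e')
    (a b : V) (F : Finset (V × V))
    (hFmem : ∀ q ∈ F, q.1 ≠ a ∧ q.2 ≠ b ∧
      ∃ w, ({a, q.1, w} : Finset V) ∈ M i ∧ ({b, q.2, w} : Finset V) ∈ E) :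
    F.card ≤ 2 := by
  rcases F.eq_empty_or_nonempty with h | ⟨q₀, hq₀⟩
  · simp [h]
  obtain ⟨h₀1, h₀2, w₀, he₀, hf₀⟩ := hFmem q₀ hq₀
  set e : Finset V := {a, q₀.1, w₀} with he
  have hecard : e.card = 3 := hcardE e (hME he₀)
  -- every q ∈ F has its M i cherry edge equal to e
  have hedge : ∀ w : V, ∀ c : V, ({a, c, w} : Finset V) ∈ M i →
      ({a, c, w} : Finset V) = e := by
    intro w c hw
    by_contra hne
    exact Finset.disjoint_left.mp (hmatch _ hw _ he₀ hne)
      (Finset.mem_insert_self a _) (by rw [he]; exact Finset.mem_insert_self a _)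
  have key2 : ∀ q ∈ F, ∀ q' ∈ F, q.1 = q'.1 → q = q' := by
    intro q hq q' hq' h1
    obtain ⟨hqa, hqb, w, hw1, hw2⟩ := hFmem q hq
    obtain ⟨hq'a, hq'b, w', hw'1, hw'2⟩ := hFmem q' hq'
    have heq1 : ({a, q.1, w} : Finset V) = e := hedge w q.1 hw1
    have heq2 : ({a, q'.1, w'} : Finset V) = e := hedge w' q'.1 hw'1
    obtain ⟨d1, d2, d3⟩ := three_distinct (heq1 ▸ hecard)
    obtain ⟨d1', d2', d3'⟩ := three_distinct (heq2 ▸ hecard)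
    -- w = w'
    have hww' : w = w' := by
      have hwmem : w ∈ ({a, q'.1, w'} : Finset V) := by
        rw [heq2, ← heq1]; simp
      rw [← h1] at hwmem
      simp only [Finset.mem_insert, Finset.mem_singleton] at hwmem
      rcases hwmem with h | h | h
      · exact absurd h.symm d2
      · exact absurd h.symm d3
      · exact h
    subst hww'
    -- q.2 = q'.2 via linearity
    have hb : b ≠ w := (three_distinct (hcardE _ hw2)).2.1
    have hfeq : ({b, q.2, w} : Finset V) = ({b, q'.2, w} : Finset V) := by
      by_contra hne
      have h2 := hlinear _ hw2 _ hw'2 hne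
      have hsub : ({b, w} : Finset V) ⊆ ({b, q.2, w} ∩ {b, q'.2, w} : Finset V) := by
        intro z hz
        simp only [Finset.mem_insert, Finset.mem_singleton] at hz
        rcases hz with rfl | rfl <;> simp [Finset.mem_inter]
      have := Finset.card_le_card hsub
      rw [Finset.card_insert_of_notMem (by simp [hb]), Finset.card_singleton] at this
      omega
    have hq2 : q.2 ∈ ({b, q'.2, w} : Finset V) := by rw [← hfeq]; simp
    obtain ⟨e1, e2, e3⟩ := three_distinct (hcardE _ hw2)
    simp only [Finset.mem_insert, Finset.mem_singleton] at hq2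
    rcases hq2 with h | h | h
    · exact absurd h hqb
    · exact Prod.ext h1 h
    · exact absurd h e3
  -- injective map q ↦ q.1 into e.erase a
  have : F.card ≤ (e.erase a).card := by
    apply Finset.card_le_card_of_injOn (fun q => q.1)
    · intro q hq
      obtain ⟨hqa, hqb, w, hw1, hw2⟩ := hFmem q hq
      have heq1 : ({a, q.1, w} : Finset V) = e := hedge w q.1 hw1
      refine Finset.mem_erase.mpr ⟨hqa, ?_⟩
      rw [← heq1]; simp
    · intro q hq q' hq' h
      exact key2 q hq q' hq' h
  have : (e.erase a).card = 2 := by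
    rw [Finset.card_erase_of_mem (by simp [he]), hecard]
  omega

/-- In the signature graph of a linear 3-uniform hypergraph partitioned into
color matchings `M i`, for any vertex `x = (u,v)` and any set `𝒞` of colors, the number of
incident edges whose color-pair meets `𝒞` is at most `4|𝒞|`. Incident edges are identified
with the neighbors `q` of `x`, and the color-pair of the edge to `q` is `{i₁, i₂}` where the
cherry hyperedges `{x.1,q.1,w}` and `{x.2,q.2,w}` lie in `M i₁` and `M i₂` respectively. -/
theorem incident_edges_meeting_colors_bound
    {V : Type*} [Fintype V] [DecidableEq V] (k : ℕ)
    (M : Fin k → Finset (Finset V)) (E : Finset (Finset V))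
    (hE : E = Finset.univ.biUnion (fun i => M i))
    (hcard : ∀ i, ∀ e ∈ M i, e.card = 3)
    (hmatching : ∀ i, ∀ e ∈ M i, ∀ e' ∈ M i, e ≠ e' → Disjoint e e')
    (hdisj : ∀ i j : Fin k, i ≠ j → Disjoint (M i) (M j))
    (hlinear : ∀ e ∈ E, ∀ e' ∈ E, e ≠ e' → (e ∩ e').card ≤ 1)
    (x : V × V) (𝒞 : Finset (Fin k)) :
    Set.ncard {q : V × V |
        (({x.1, x.2} : Set V) ∩ {q.1, q.2} = ∅) ∧
        ∃ w : V, ∃ i₁ i₂ : Fin k,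
          ({x.1, q.1, w} : Finset V) ∈ M i₁ ∧ ({x.2, q.2, w} : Finset V) ∈ M i₂ ∧
          (i₁ ∈ 𝒞 ∨ i₂ ∈ 𝒞)} ≤ 4 * 𝒞.card := by
  classical
  have hcardE : ∀ e ∈ E, e.card = 3 := by
    intro e he
    rw [hE, Finset.mem_biUnion] at he
    obtain ⟨i, -, hi⟩ := he
    exact hcard i e hi
  have hME : ∀ i, M i ⊆ E := by
    intro i e he; rw [hE, Finset.mem_biUnion]; exact ⟨i, Finset.mem_univ i, he⟩
  set P : V × V → Prop := fun q =>
        (({x.1, x.2} : Set V) ∩ {q.1, q.2} = ∅) ∧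
        ∃ w : V, ∃ i₁ i₂ : Fin k,
          ({x.1, q.1, w} : Finset V) ∈ M i₁ ∧ ({x.2, q.2, w} : Finset V) ∈ M i₂ ∧
          (i₁ ∈ 𝒞 ∨ i₂ ∈ 𝒞) with hP
  set S : Finset (V × V) := Finset.univ.filter P with hS
  have hset : {q : V × V | P q} = ↑S := by
    ext q; simp [hS]
  rw [hset, Set.ncard_coe_finset]
  -- split by color
  set A : Fin k → Finset (V × V) := fun i => S.filter (fun q =>
    ∃ w i₂, ({x.1, q.1, w} : Finset V) ∈ M i ∧ ({x.2, q.2, w} : Finset V) ∈ M i₂) with hA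
  set B : Fin k → Finset (V × V) := fun i => S.filter (fun q =>
    ∃ w i₁, ({x.1, q.1, w} : Finset V) ∈ M i₁ ∧ ({x.2, q.2, w} : Finset V) ∈ M i) with hB
  -- disjointness facts from P
  have hPdisj : ∀ q, P q → q.1 ≠ x.1 ∧ q.2 ≠ x.2 := by
    intro q hq
    obtain ⟨hd, -⟩ := hq
    rw [Set.eq_empty_iff_forall_notMem] at hd
    constructor
    · intro h; exact hd x.1 ⟨by simp, by simp [← h]⟩
    · intro h; exact hd x.2 ⟨by simp, by simp [← h]⟩
  have hAcard : ∀ i, (A i).card ≤ 2 := by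
    intro i
    apply key hcardE hlinear i (hME i) (hmatching i) x.1 x.2
    intro q hq
    rw [hA, Finset.mem_filter] at hq
    obtain ⟨hqS, w, i₂, hw1, hw2⟩ := hq
    have hPq : P q := (Finset.mem_filter.mp hqS).2
    obtain ⟨h1, h2⟩ := hPdisj q hPq
    exact ⟨h1, h2, w, hw1, hME i₂ hw2⟩
  have hBcard : ∀ i, (B i).card ≤ 2 := by
    intro i
    have := key hcardE hlinear i (hME i) (hmatching i) x.2 x.1
      ((B i).image Prod.swap) ?_
    · have himg : ((B i).image Prod.swap).card = (B i).card :=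
        Finset.card_image_of_injective _ Prod.swap_injective
      omega
    · intro q hq
      rw [Finset.mem_image] at hq
      obtain ⟨p, hp, rfl⟩ := hq
      rw [hB, Finset.mem_filter] at hp
      obtain ⟨hpS, w, i₁, hw1, hw2⟩ := hp
      have hPp : P p := (Finset.mem_filter.mp hpS).2
      obtain ⟨h1, h2⟩ := hPdisj p hPp
      exact ⟨h2, h1, w, hw2, hME i₁ hw1⟩
  have hsub : S ⊆ 𝒞.biUnion (fun i => A i ∪ B i) := by
    intro q hq
    have hPq : P q := (Finset.mem_filter.mp hq).2
    obtain ⟨-, w, i₁, i₂, hw1, hw2, hC⟩ := hPq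
    rw [Finset.mem_biUnion]
    rcases hC with hC | hC
    · exact ⟨i₁, hC, Finset.mem_union_left _ (Finset.mem_filter.mpr
        ⟨hq, w, i₂, hw1, hw2⟩)⟩
    · exact ⟨i₂, hC, Finset.mem_union_right _ (Finset.mem_filter.mpr
        ⟨hq, w, i₁, hw1, hw2⟩)⟩
  calc S.card ≤ (𝒞.biUnion (fun i => A i ∪ B i)).card := Finset.card_le_card hsub
    _ ≤ ∑ i ∈ 𝒞, (A i ∪ B i).card := Finset.card_biUnion_le
    _ ≤ ∑ i ∈ 𝒞, 4 := by
        apply Finset.sum_le_sum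
        intro i hi
        have := Finset.card_union_le (A i) (B i)
        have h1 := hAcard i
        have h2 := hBcard i
        omega
    _ = 4 * 𝒞.card := by rw [Finset.sum_const, smul_eq_mul, mul_comm]
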